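/- arXiv:2005.03634 — 2 statements merged into one kernel-verified Lean document; each statement's English description precedes it below -/
import Mathlib

section
/- Let p be a prime, let G be a finite p-group whose nilpotency class is at most 2, and let w be a word in two variables (an element of the free group on two generators). Then for every w-value g ∈ G_w, the fibre size satisfies N_{w,G}(g) ≥ |G|. -/
/-!
In a group of class at most two every two-variable word evaluates as `x ^ a * y ^ b * ⁅y, x⁆ ^ c`:
it factors through the Heisenberg group, the free class-two group of rank two. The substitutions
`(x, y) ↦ (y, x)` and `(x, y) ↦ (x, y * x ^ k)` permute `G × G` and act on `(a, b)` as the steps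
of the Euclidean algorithm, so it suffices to bound the fibres of `(x, y) ↦ x ^ a * ⁅y, x⁆ ^ c`.
There `ψ : t ↦ ⁅t, x₀ ^ c⁆` is a homomorphism with central image, and the points
`(x₀ * z, y₀ * s(z) ^ (-a) * k)`, for `z ∈ range ψ`, `k ∈ ker ψ` and a section `s` of `ψ`, are
`|range ψ| * |ker ψ| = |G|` distinct points of the fibre through `(x₀, y₀)`.
-/

open scoped commutatorElement

section ClassTwo

variable {G : Type*} [Group G] (hG : commutator G ≤ Subgroup.center G)
include hG

theorem commute_commutatorElement (x y z : G) : Commute ⁅x, y⁆ z :=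
  (Subgroup.mem_center_iff.mp
    (hG (Subgroup.commutator_mem_commutator (Subgroup.mem_top x) (Subgroup.mem_top y))) z).symm

theorem commutatorElement_mul_right_of_le_center (x y z : G) :
    ⁅x, y * z⁆ = ⁅x, y⁆ * ⁅x, z⁆ := by
  rw [commutatorElement_mul_right_eq_mul_conj, mul_assoc _ y,
    ← (commute_commutatorElement hG x z y).eq, ← mul_assoc, mul_inv_cancel_right]

theorem commutatorElement_mul_left_of_le_center (x y z : G) :
    ⁅x * y, z⁆ = ⁅x, z⁆ * ⁅y, z⁆ := by
  rw [commutatorElement_mul_left_eq_conj_mul, ← (commute_commutatorElement hG y z x).eq,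
    mul_inv_cancel_right, (commute_commutatorElement hG y z _).eq]

def commutatorLeftHom (y : G) : G →* G :=
  MonoidHom.mk' (⁅·, y⁆) fun x x' => commutatorElement_mul_left_of_le_center hG x x' y

theorem commutatorElement_zpow_left_of_le_center (x y : G) (n : ℤ) :
    ⁅x ^ n, y⁆ = ⁅x, y⁆ ^ n :=
  map_zpow (commutatorLeftHom hG y) x n

theorem commutatorElement_zpow_right_of_le_center (x y : G) (n : ℤ) :
    ⁅x, y ^ n⁆ = ⁅x, y⁆ ^ n := by
  rw [← commutatorElement_inv, commutatorElement_zpow_left_of_le_center hG, ← inv_zpow,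
    commutatorElement_inv]

theorem zpow_mul_zpow_eq_of_le_center (x y : G) (m n : ℤ) :
    y ^ n * x ^ m = ⁅y, x⁆ ^ (n * m) * (x ^ m * y ^ n) := by
  rw [zpow_mul, ← commutatorElement_zpow_left_of_le_center hG,
    ← commutatorElement_zpow_right_of_le_center hG]
  simp [commutatorElement_def, mul_assoc]

theorem card_le_card_fibre_zpow_mul_commutatorElement_zpow [Finite G] (a c : ℤ) (x₀ y₀ : G) :
    Nat.card G ≤ Nat.card {p : G × G // p.1 ^ a * ⁅p.2, p.1⁆ ^ c = x₀ ^ a * ⁅y₀, x₀⁆ ^ c} := by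
  set ψ := commutatorLeftHom hG (x₀ ^ c)
  have hψ (t : G) : ψ t = ⁅t, x₀⁆ ^ c := commutatorElement_zpow_right_of_le_center hG t x₀ c
  have hcentral (z : ψ.range) (g : G) : Commute (z : G) g := by
    obtain ⟨t, ht⟩ := z.2
    rw [← ht]
    exact commute_commutatorElement hG _ _ g
  have hfibre (z : ψ.range) (t : G) :
      (x₀ * z) ^ a * ⁅t, x₀ * z⁆ ^ c = x₀ ^ a * (z ^ a * ψ t) := by
    rw [(hcentral z x₀).symm.mul_zpow, commutatorElement_mul_right_of_le_center hG,
      commutatorElement_eq_one_iff_commute.mpr (hcentral z t).symm, mul_one, hψ, mul_assoc]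
  choose s hs using ψ.rangeRestrict_surjective
  have hs' (z : ψ.range) : ψ (s z) = z := congrArg Subtype.val (hs z)
  let Φ (zk : ψ.range × ψ.ker) :
      {p : G × G // p.1 ^ a * ⁅p.2, p.1⁆ ^ c = x₀ ^ a * ⁅y₀, x₀⁆ ^ c} :=
    ⟨(x₀ * zk.1, y₀ * s zk.1 ^ (-a) * zk.2), by
      rw [hfibre, map_mul, map_mul, map_zpow, hs', ψ.mem_ker.mp zk.2.2, mul_one, hψ,
        ((hcentral zk.1 _).zpow_left a).left_comm, ← zpow_add, add_neg_cancel, zpow_zero,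
        mul_one]⟩
  have hΦ : Function.Injective Φ := by
    rintro ⟨z, k⟩ ⟨z', k'⟩ h
    simp only [Φ, Subtype.mk.injEq, Prod.mk.injEq] at h
    obtain rfl : z = z' := Subtype.ext (mul_left_cancel h.1)
    obtain rfl : k = k' := Subtype.ext (mul_left_cancel h.2)
    rfl
  calc Nat.card G = Nat.card (ψ.range × ψ.ker) := by
        rw [Nat.card_prod, ← Subgroup.index_ker, mul_comm, Subgroup.card_mul_index]
    _ ≤ _ := Nat.card_le_card_of_injective Φ hΦ

end ClassTwo

/-- `⟨a, b, c⟩` stands for `x ^ a * y ^ b * ⁅y, x⁆ ^ c`; the product is read off from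
`y ^ b * x ^ a' = ⁅y, x⁆ ^ (b * a') * (x ^ a' * y ^ b)`. -/
@[ext]
structure Heisenberg where
  a : ℤ
  b : ℤ
  c : ℤ

namespace Heisenberg

instance : Mul Heisenberg := ⟨fun u v => ⟨u.a + v.a, u.b + v.b, u.c + v.c + u.b * v.a⟩⟩
instance : One Heisenberg := ⟨⟨0, 0, 0⟩⟩
instance : Inv Heisenberg := ⟨fun u => ⟨-u.a, -u.b, -u.c + u.a * u.b⟩⟩

@[simp] theorem mul_a (u v : Heisenberg) : (u * v).a = u.a + v.a := rfl
@[simp] theorem mul_b (u v : Heisenberg) : (u * v).b = u.b + v.b := rfl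
@[simp] theorem mul_c (u v : Heisenberg) : (u * v).c = u.c + v.c + u.b * v.a := rfl
@[simp] theorem one_a : (1 : Heisenberg).a = 0 := rfl
@[simp] theorem one_b : (1 : Heisenberg).b = 0 := rfl
@[simp] theorem one_c : (1 : Heisenberg).c = 0 := rfl
@[simp] theorem inv_a (u : Heisenberg) : u⁻¹.a = -u.a := rfl
@[simp] theorem inv_b (u : Heisenberg) : u⁻¹.b = -u.b := rfl
@[simp] theorem inv_c (u : Heisenberg) : u⁻¹.c = -u.c + u.a * u.b := rfl

instance : Group Heisenberg where
  mul_assoc u v w := by ext <;> simp <;> ring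
  one_mul u := by ext <;> simp
  mul_one u := by ext <;> simp
  inv_mul_cancel u := by ext <;> simp; ring

def X : Heisenberg := ⟨1, 0, 0⟩
def Y : Heisenberg := ⟨0, 1, 0⟩

def ofWord : FreeGroup (Fin 2) →* Heisenberg := FreeGroup.lift ![X, Y]

@[simp] theorem zpow_a (u : Heisenberg) (n : ℤ) : (u ^ n).a = n * u.a := by
  induction n using Int.induction_on with
  | zero => simp
  | succ k ih => rw [zpow_add_one, mul_a, ih]; ring
  | pred k ih => rw [zpow_sub_one, mul_a, inv_a, ih]; ring

@[simp] theorem zpow_b (u : Heisenberg) (n : ℤ) : (u ^ n).b = n * u.b := by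
  induction n using Int.induction_on with
  | zero => simp
  | succ k ih => rw [zpow_add_one, mul_b, ih]; ring
  | pred k ih => rw [zpow_sub_one, mul_b, inv_b, ih]; ring

@[simp] theorem commutatorElement_a (u v : Heisenberg) : ⁅u, v⁆.a = 0 := by
  simp [commutatorElement_def]

@[simp] theorem commutatorElement_b (u v : Heisenberg) : ⁅u, v⁆.b = 0 := by
  simp [commutatorElement_def]

theorem commutator_le_center : commutator Heisenberg ≤ Subgroup.center Heisenberg :=
  Subgroup.commutator_le.mpr fun u _ v _ => Subgroup.mem_center_iff.mpr fun w => by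
    ext <;> simp [add_comm]

section Lift

variable {G : Type*} [Group G] (hG : commutator G ≤ Subgroup.center G)

def lift (x y : G) : Heisenberg →* G where
  toFun u := x ^ u.a * y ^ u.b * ⁅y, x⁆ ^ u.c
  map_one' := by simp
  map_mul' u v := by
    have hc (n : ℤ) (g : G) : Commute (⁅y, x⁆ ^ n) g :=
      (commute_commutatorElement hG y x g).zpow_left n
    calc x ^ (u.a + v.a) * y ^ (u.b + v.b) * ⁅y, x⁆ ^ (u.c + v.c + u.b * v.a)
        = x ^ u.a * (⁅y, x⁆ ^ (u.b * v.a) * (x ^ v.a * y ^ u.b)) * y ^ v.b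
            * (⁅y, x⁆ ^ u.c * ⁅y, x⁆ ^ v.c) := by
          simp only [mul_assoc]
          rw [(hc (u.b * v.a) _).eq]
          simp only [zpow_add, mul_assoc]
      _ = x ^ u.a * y ^ u.b * ⁅y, x⁆ ^ u.c * (x ^ v.a * y ^ v.b * ⁅y, x⁆ ^ v.c) := by
          rw [← zpow_mul_zpow_eq_of_le_center hG]
          simp only [mul_assoc, (hc _ _).left_comm]

theorem lift_apply (x y : G) (u : Heisenberg) :
    lift hG x y u = x ^ u.a * y ^ u.b * ⁅y, x⁆ ^ u.c := rfl

@[simp] theorem lift_X (x y : G) : lift hG x y X = x := by simp [lift_apply, X]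
@[simp] theorem lift_Y (x y : G) : lift hG x y Y = y := by simp [lift_apply, Y]

theorem lift_lift (x y : G) (U V u : Heisenberg) :
    lift hG x y (lift commutator_le_center U V u) =
      lift hG (lift hG x y U) (lift hG x y V) u := by
  simp only [lift_apply, map_mul, map_zpow, map_commutatorElement]

theorem lift_a (U V u : Heisenberg) :
    (lift commutator_le_center U V u).a = u.a * U.a + u.b * V.a := by
  simp [lift_apply]

theorem lift_b (U V u : Heisenberg) :
    (lift commutator_le_center U V u).b = u.a * U.b + u.b * V.b := by
  simp [lift_apply]

theorem lift_comp_ofWord (f : Fin 2 → G) :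
    (lift hG (f 0) (f 1)).comp ofWord = FreeGroup.lift f :=
  FreeGroup.ext_hom _ _ fun i => by fin_cases i <;> simp [ofWord]

end Lift

theorem induction_on_ab {P : Heisenberg → Prop} (base : ∀ a c : ℤ, P ⟨a, 0, c⟩)
    (swap : ∀ u, P (lift commutator_le_center Y X u) → P u)
    (shear : ∀ (k : ℤ) u, P (lift commutator_le_center X (Y * X ^ k) u) → P u)
    (u : Heisenberg) : P u := by
  induction hn : u.b.natAbs using Nat.strong_induction_on generalizing u with
  | _ n ih =>
    obtain ⟨a, b, c⟩ := u
    rcases eq_or_ne b 0 with rfl | hb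
    · exact base a c
    refine shear (-(a / b)) _ (swap _ (ih _ ?_ _ rfl))
    have hrem : (lift commutator_le_center Y X
        (lift commutator_le_center X (Y * X ^ (-(a / b))) ⟨a, b, c⟩)).b = a % b := by
      simp [lift_a, lift_b, X, Y, Int.emod_def]
      ring
    have hlt : a % b < b.natAbs := Int.abs_eq_natAbs b ▸ Int.emod_lt_abs a hb
    have hnonneg := Int.emod_nonneg a hb
    rw [hrem, ← hn]
    show (a % b).natAbs < b.natAbs
    omega

section Fibres

variable {G : Type*} [Group G] (hG : commutator G ≤ Subgroup.center G)

def FibresAtLeastCard (u : Heisenberg) : Prop :=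
  ∀ p₀ : G × G, Nat.card G ≤ Nat.card {p : G × G // lift hG p.1 p.2 u = lift hG p₀.1 p₀.2 u}

variable {hG}

theorem FibresAtLeastCard.of_map (τ : G × G ≃ G × G) (σ : Heisenberg →* Heisenberg)
    (hτ : ∀ p u, lift hG (τ p).1 (τ p).2 u = lift hG p.1 p.2 (σ u)) {u : Heisenberg}
    (h : FibresAtLeastCard hG (σ u)) : FibresAtLeastCard hG u := by
  intro p₀
  obtain ⟨q₀, rfl⟩ := τ.surjective p₀
  calc Nat.card G ≤ Nat.card {p : G × G // lift hG p.1 p.2 (σ u) = lift hG q₀.1 q₀.2 (σ u)} :=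
        h q₀
    _ = _ := Nat.card_congr (τ.subtypeEquiv fun p => by rw [hτ, hτ])

variable (hG)

theorem fibresAtLeastCard [Finite G] (u : Heisenberg) : FibresAtLeastCard hG u := by
  induction u using induction_on_ab with
  | base a c =>
    intro p₀
    simpa [lift_apply] using card_le_card_fibre_zpow_mul_commutatorElement_zpow hG a c p₀.1 p₀.2
  | swap u h =>
    exact h.of_map (Equiv.prodComm G G) _ fun p u => by simp [lift_lift]
  | shear k u h =>
    exact h.of_map (Equiv.prodShear (Equiv.refl G) fun x => Equiv.mulRight (x ^ k)) _
      fun p u => by simp [lift_lift]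

end Fibres

end Heisenberg

/-- `N_{w,G}(g)`: the number of `k`-tuples in `G` on which the word `w` evaluates to `g`. -/
noncomputable def wordFibreCard {k : ℕ} (G : Type*) [Group G] (w : FreeGroup (Fin k)) (g : G) : ℕ :=
  Nat.card {f : Fin k → G // FreeGroup.lift f w = g}

theorem fibre_ge_card_of_two_variable_word_general
    (G : Type*) [Group G] [Finite G]
    (hclass : commutator G ≤ Subgroup.center G)
    (w : FreeGroup (Fin 2)) (g : G)
    (hg : g ∈ Set.range fun f : Fin 2 → G => FreeGroup.lift f w) :
    Nat.card G ≤ wordFibreCard G w g := by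
  obtain ⟨f₀, rfl⟩ := hg
  have hw (f : Fin 2 → G) :
      FreeGroup.lift f w = Heisenberg.lift hclass (f 0) (f 1) (Heisenberg.ofWord w) := by
    rw [← MonoidHom.comp_apply, Heisenberg.lift_comp_ofWord]
  calc Nat.card G
      ≤ Nat.card {p : G × G // Heisenberg.lift hclass p.1 p.2 (Heisenberg.ofWord w) =
          Heisenberg.lift hclass (f₀ 0) (f₀ 1) (Heisenberg.ofWord w)} :=
        Heisenberg.fibresAtLeastCard hclass _ (f₀ 0, f₀ 1)
    _ = wordFibreCard G w (FreeGroup.lift f₀ w) :=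
        Nat.card_congr ((piFinTwoEquiv fun _ => G).subtypeEquiv fun f => by simp [hw]).symm

/-- for a finite `p`-group `G` of nilpotency class at most 2 and a word `w`
in two variables, every `w`-value `g` satisfies `N_{w,G}(g) ≥ |G|`. -/
theorem fibre_ge_card_of_two_variable_word (p : ℕ) (hp : p.Prime)
    (G : Type*) [Group G] [Finite G] (hpG : IsPGroup p G)
    (hclass : commutator G ≤ Subgroup.center G)
    (w : FreeGroup (Fin 2)) (g : G)
    (hg : g ∈ Set.range fun f : Fin 2 → G => FreeGroup.lift f w) :
    Nat.card G ≤ wordFibreCard G w g :=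
  fibre_ge_card_of_two_variable_word_general G hclass w g hg
end

section
/- Let p be a prime, let G be a finite p-group of nilpotency class at most 2, let r ≥ 1 and 0 ≤ s_1 ≤ ⋯ ≤ s_r be integers, and let w be the word in 2r variables w = [x_1,x_2]^{p^{s_1}} ⋯ [x_{2r−1},x_{2r}]^{p^{s_r}}. Then for every w-value g ∈ G_w, the fibre size satisfies N_{w,G}(g) ≥ |G|^{2r} / |Z(G)|². -/
/-- The word `[x₁,x₂]^{p^{s₁}} ⋯ [x_{2r-1},x_{2r}]^{p^{s_r}}` (with `[x,y] = x⁻¹y⁻¹xy`)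
in `2r` variables. -/
def wCommPow (p r : ℕ) (s : Fin r → ℕ) : FreeGroup (Fin (2 * r)) :=
  (List.ofFn fun i : Fin r =>
    ((FreeGroup.of (⟨2 * i.val, by have := i.isLt; omega⟩ : Fin (2 * r)))⁻¹ *
     (FreeGroup.of (⟨2 * i.val + 1, by have := i.isLt; omega⟩ : Fin (2 * r)))⁻¹ *
     FreeGroup.of (⟨2 * i.val, by have := i.isLt; omega⟩ : Fin (2 * r)) *
     FreeGroup.of (⟨2 * i.val + 1, by have := i.isLt; omega⟩ : Fin (2 * r))) ^ (p ^ s i)).prod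

/-!
In class at most two the commutator is bilinear with values in the centre `Z`, so the word map
becomes a bihomomorphism `β(x, y) = ∏ [xᵢ, yᵢ]^{p^{sᵢ}}` from `Gʳ × Gʳ` to `Z`. If `g = β(a, b)`,
then each of the at least `|G|ʳ / |Z|` elements `x` of the fibre of `β(·, b)` over `g` has `b` in
the fibre of `β(x, ·)` over `g`, which therefore also has at least `|G|ʳ / |Z|` elements.
-/

open scoped IsMulCommutative commutatorElement

namespace MonoidHom

variable {A B C : Type*} [Group A] [Group B]

theorem card_le_card_fiber_mul_card [Finite B] [Group C] [Finite C] (f : B →* C) (b : B) :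
    Nat.card B ≤ Nat.card (f ⁻¹' {f b}) * Nat.card C := by
  rw [Nat.card_congr (f.fiberEquivKer b), ← f.ker.card_mul_index, Subgroup.index_ker]
  exact Nat.mul_le_mul_left _ f.range.card_le_card_group

theorem card_mul_card_le_card_fiber_mul_sq [Finite A] [Finite B] [CommGroup C] [Finite C]
    (β : A →* B →* C) (a : A) (b : B) :
    Nat.card A * Nat.card B ≤ Nat.card {q : A × B // β q.1 q.2 = β a b} * Nat.card C ^ 2 := by
  set X := β.flip b ⁻¹' {β.flip b a}
  have hX : Nat.card A ≤ Nat.card X * Nat.card C := (β.flip b).card_le_card_fiber_mul_card a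
  have hfibre (x : X) : Nat.card B ≤ Nat.card ((β x) ⁻¹' {β a b}) * Nat.card C := by
    have hx : β x b = β a b := x.2
    simpa only [hx] using (β x).card_le_card_fiber_mul_card b
  have hsigma : Nat.card ((x : X) × (β x) ⁻¹' {β a b}) ≤
      Nat.card {q : A × B // β q.1 q.2 = β a b} := by
    refine Nat.card_le_card_of_injective (fun q => ⟨(q.1, q.2), q.2.2⟩) ?_
    rintro ⟨⟨x, _⟩, ⟨y, _⟩⟩ ⟨⟨x', _⟩, ⟨y', _⟩⟩ h
    obtain ⟨rfl, rfl⟩ := Prod.ext_iff.mp (congrArg Subtype.val h)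
    rfl
  have := Fintype.ofFinite X
  rw [Nat.card_sigma] at hsigma
  calc Nat.card A * Nat.card B ≤ Nat.card X * Nat.card C * Nat.card B :=
        Nat.mul_le_mul_right _ hX
    _ = (∑ _x : X, Nat.card B) * Nat.card C := by
        rw [Finset.sum_const, Finset.card_univ, smul_eq_mul, Nat.card_eq_fintype_card]; ring
    _ ≤ (∑ x : X, Nat.card ((β x) ⁻¹' {β a b}) * Nat.card C) * Nat.card C :=
        Nat.mul_le_mul_right _ (Finset.sum_le_sum fun x _ => hfibre x)
    _ ≤ Nat.card {q : A × B // β q.1 q.2 = β a b} * Nat.card C ^ 2 := by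
        rw [← Finset.sum_mul, sq, ← mul_assoc]
        exact Nat.mul_le_mul_right _ (Nat.mul_le_mul_right _ hsigma)

end MonoidHom

section CentralCommutator

variable {G : Type*} [Group G] (hG : commutator G ≤ Subgroup.center G)
include hG

theorem commutatorElement_mem_center (x y : G) : ⁅x, y⁆ ∈ Subgroup.center G :=
  hG (Subgroup.commutator_mem_commutator (Subgroup.mem_top x) (Subgroup.mem_top y))

def centralCommutator : G →* G →* Subgroup.center G where
  toFun x :=
    { toFun y := ⟨⁅x, y⁆, commutatorElement_mem_center hG x y⟩
      map_one' := Subtype.ext (commutatorElement_one_right x)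
      map_mul' y z := Subtype.ext <| by
        change ⁅x, y * z⁆ = ⁅x, y⁆ * ⁅x, z⁆
        have hc := Subgroup.mem_center_iff.mp (commutatorElement_mem_center hG x z)
        rw [commutatorElement_mul_right_eq_mul_conj, mul_assoc _ y, hc, ← mul_assoc,
          mul_inv_cancel_right] }
  map_one' := MonoidHom.ext fun y => Subtype.ext (commutatorElement_one_left y)
  map_mul' x z := MonoidHom.ext fun y => Subtype.ext <| by
    change ⁅x * z, y⁆ = ⁅x, y⁆ * ⁅z, y⁆
    have hc := Subgroup.mem_center_iff.mp (commutatorElement_mem_center hG z y)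
    rw [commutatorElement_mul_left_eq_conj_mul, hc, mul_inv_cancel_right, hc]

end CentralCommutator

section CommutatorPowProd

variable {G : Type*} [Group G] (hG : commutator G ≤ Subgroup.center G)

@[simp]
theorem coe_centralCommutator_apply (x y : G) : (centralCommutator hG x y : G) = ⁅x, y⁆ := rfl

theorem centralCommutator_inv_inv (x y : G) :
    centralCommutator hG x⁻¹ y⁻¹ = centralCommutator hG x y := by
  simp only [map_inv, MonoidHom.inv_apply, inv_inv]

variable {ι : Type*} [Fintype ι]

def commutatorPowProd (n : ι → ℕ) : (ι → G) →* (ι → G) →* Subgroup.center G :=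
  ∏ i, ((centralCommutator hG).comp (Pi.evalMonoidHom (fun _ => G) i)).compl₂
    (Pi.evalMonoidHom (fun _ => G) i) ^ n i

theorem commutatorPowProd_apply (n : ι → ℕ) (x y : ι → G) :
    commutatorPowProd hG n x y = ∏ i, centralCommutator hG (x i) (y i) ^ n i := by
  simp [commutatorPowProd, MonoidHom.finsetProd_apply]

end CommutatorPowProd

section Interleave

variable {α : Type*} {r : ℕ}

def evenIdx (i : Fin r) : Fin (2 * r) := ⟨2 * i.val, by omega⟩

def oddIdx (i : Fin r) : Fin (2 * r) := ⟨2 * i.val + 1, by omega⟩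

def interleave (x y : Fin r → α) (j : Fin (2 * r)) : α :=
  if j.val % 2 = 0 then x ⟨j.val / 2, by omega⟩ else y ⟨j.val / 2, by omega⟩

theorem interleave_comp_evenIdx (x y : Fin r → α) : interleave x y ∘ evenIdx = x := by
  funext i
  simp [interleave, evenIdx]

theorem interleave_comp_oddIdx (x y : Fin r → α) : interleave x y ∘ oddIdx = y := by
  funext i
  have hdiv : (2 * i.val + 1) / 2 = i.val := by omega
  simp [interleave, oddIdx, hdiv]

end Interleave

theorem lift_wCommPow {G : Type*} [Group G] (hG : commutator G ≤ Subgroup.center G)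
    (p r : ℕ) (s : Fin r → ℕ) (f : Fin (2 * r) → G) :
    FreeGroup.lift f (wCommPow p r s) =
      commutatorPowProd hG (fun i => p ^ s i) (f ∘ evenIdx) (f ∘ oddIdx) := by
  rw [commutatorPowProd_apply, ← List.prod_ofFn, ← Subgroup.coe_subtype, map_list_prod,
    wCommPow, map_list_prod, List.map_ofFn, List.map_ofFn]
  congr 2
  funext i
  simp only [Function.comp_apply, map_pow, map_mul, map_inv, FreeGroup.lift_apply_of,
    Subgroup.coe_subtype, Subgroup.coe_pow]
  -- The word's `[x, y] = x⁻¹y⁻¹xy` is Mathlib's `⁅x⁻¹, y⁻¹⁆`, which equals `⁅x, y⁆` by bilinearity.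
  rw [← centralCommutator_inv_inv hG, coe_centralCommutator_apply, commutatorElement_def,
    inv_inv, inv_inv]
  rfl

theorem card_commutatorPowProd_fiber_le_wordFibreCard {G : Type*} [Group G] [Finite G]
    (hG : commutator G ≤ Subgroup.center G) (p r : ℕ) (s : Fin r → ℕ) (x y : Fin r → G) :
    Nat.card {q : (Fin r → G) × (Fin r → G) //
        commutatorPowProd hG (fun i => p ^ s i) q.1 q.2 =
          commutatorPowProd hG (fun i => p ^ s i) x y} ≤
      wordFibreCard G (wCommPow p r s) (commutatorPowProd hG (fun i => p ^ s i) x y) := by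
  refine Nat.card_le_card_of_injective (fun q => ⟨interleave q.1.1 q.1.2, ?_⟩) ?_
  · rw [lift_wCommPow hG, interleave_comp_evenIdx, interleave_comp_oddIdx, q.2]
  · intro q q' h
    have h' := congrArg (fun f => (f ∘ evenIdx, f ∘ oddIdx)) (congrArg Subtype.val h)
    simp only [interleave_comp_evenIdx, interleave_comp_oddIdx] at h'
    exact Subtype.ext h'

theorem fibre_ge_of_commutator_power_word_general (p : ℕ)
    (G : Type*) [Group G] [Finite G]
    (hclass : commutator G ≤ Subgroup.center G)
    (r : ℕ) (s : Fin r → ℕ)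
    (g : G)
    (hg : g ∈ Set.range fun f : Fin (2 * r) → G => FreeGroup.lift f (wCommPow p r s)) :
    (Nat.card G : ℚ) ^ (2 * r) / (Nat.card (Subgroup.center G) : ℚ) ^ 2
      ≤ (wordFibreCard G (wCommPow p r s) g : ℚ) := by
  obtain ⟨f, rfl⟩ := hg
  have hcount := (commutatorPowProd hclass fun i => p ^ s i).card_mul_card_le_card_fiber_mul_sq
    (f ∘ evenIdx) (f ∘ oddIdx)
  rw [Nat.card_fun, Nat.card_fin, ← pow_add, ← two_mul] at hcount
  have hfibre :=
    card_commutatorPowProd_fiber_le_wordFibreCard hclass p r s (f ∘ evenIdx) (f ∘ oddIdx)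
  rw [← lift_wCommPow] at hfibre
  have hZ : 0 < Nat.card (Subgroup.center G) := Nat.card_pos
  rw [div_le_iff₀ (by positivity)]
  exact_mod_cast hcount.trans (Nat.mul_le_mul_right _ hfibre)

/-- for a finite `p`-group `G` of nilpotency class at most 2 and the word
`w = [x₁,x₂]^{p^{s₁}} ⋯ [x_{2r-1},x_{2r}]^{p^{s_r}}` with `0 ≤ s₁ ≤ ⋯ ≤ s_r`, every
`w`-value `g` satisfies `N_{w,G}(g) ≥ |G|^{2r} / |Z(G)|²`. -/
theorem fibre_ge_of_commutator_power_word (p : ℕ) (hp : p.Prime)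
    (G : Type*) [Group G] [Finite G] (hpG : IsPGroup p G)
    (hclass : commutator G ≤ Subgroup.center G)
    (r : ℕ) (hr : 1 ≤ r) (s : Fin r → ℕ) (hs : Monotone s)
    (g : G)
    (hg : g ∈ Set.range fun f : Fin (2 * r) → G => FreeGroup.lift f (wCommPow p r s)) :
    (Nat.card G : ℚ) ^ (2 * r) / (Nat.card (Subgroup.center G) : ℚ) ^ 2
      ≤ (wordFibreCard G (wCommPow p r s) g : ℚ) :=
  fibre_ge_of_commutator_power_word_general p G hclass r s g hg
end
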